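/- Let f be a polynomial over ℂ of degree 5, and for 1 ≤ ρ ≤ 4 let φ_ρ denote the average of f over the multiset of the (5−ρ) roots of the ρ-th derivative f^(ρ) (counted with multiplicity). Then 1·φ₁ − 2·φ₂ + 2·φ₃ − 1·φ₄ = 0; i.e., the alternating binomial combination ∑_{0<ρ<5} (−1)^ρ·C(5,ρ)·φ_ρ vanishes (after dividing by 5). -/

import Mathlib

open Polynomial

/-! Each `φ_ρ` is an explicit rational function of the coefficients `a₀, …, a₅` of `f`. By
Vieta's formulas for `f^(ρ)`, whose leading coefficient is `5!/(5-ρ)! · a₅`, the coefficients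
`a_ρ, …, a₄` are `a₅` times elementary symmetric functions of the roots of `f^(ρ)`; after this
substitution the sum of `f` over those roots and the closed form are rational functions of the
roots, `a₀, …, a_{ρ-1}` and `a₅` that agree identically. The relation between `φ₁, …, φ₄` is
then an identity of rational functions of `a₀, …, a₅`. -/

/-- The average of `f` over the roots of the `ρ`-th derivative of `f`,
counted with multiplicity. -/
noncomputable def phi (f : Polynomial ℂ) (ρ : ℕ) : ℂ :=
  ((derivative^[ρ] f).roots.map (fun x => f.eval x)).sum / ((f.natDegree - ρ : ℕ) : ℂ)

section IterateDerivative

variable {R : Type*} [Semiring R] [NoZeroDivisors R] [CharZero R]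

theorem natDegree_iterate_derivative_eq (p : R[X]) (k : ℕ) :
    (derivative^[k] p).natDegree = p.natDegree - k := by
  rcases eq_or_ne p 0 with rfl | hp
  · simp
  rcases le_or_gt k p.natDegree with hk | hk
  · refine natDegree_eq_of_le_of_coeff_ne_zero (natDegree_iterate_derivative p k) ?_
    rw [coeff_iterate_derivative, Nat.sub_add_cancel hk, nsmul_eq_mul]
    exact mul_ne_zero (Nat.cast_ne_zero.2 (Nat.descFactorial_pos.2 hk).ne')
      (leadingCoeff_ne_zero.2 hp)
  · rw [iterate_derivative_eq_zero hk, natDegree_zero]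
    omega

theorem leadingCoeff_iterate_derivative (p : R[X]) {k : ℕ} (hk : k ≤ p.natDegree) :
    (derivative^[k] p).leadingCoeff = p.natDegree.descFactorial k * p.leadingCoeff := by
  rw [leadingCoeff, natDegree_iterate_derivative_eq, coeff_iterate_derivative,
    Nat.sub_add_cancel hk, nsmul_eq_mul, leadingCoeff]

end IterateDerivative

section IsAlgClosed

variable {K : Type*} [Field K] [IsAlgClosed K] [CharZero K]

theorem card_roots_iterate_derivative (p : K[X]) (k : ℕ) :
    Multiset.card (derivative^[k] p).roots = p.natDegree - k := by
  rw [splits_iff_card_roots.1 (IsAlgClosed.splits _), natDegree_iterate_derivative_eq]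

theorem descFactorial_mul_coeff_eq_esymm_roots_iterate_derivative (p : K[X]) {k m : ℕ}
    (hkm : k ≤ m) (hm : m ≤ p.natDegree) :
    m.descFactorial k * p.coeff m = p.natDegree.descFactorial k * p.leadingCoeff *
      ((-1) ^ (p.natDegree - m) * (derivative^[k] p).roots.esymm (p.natDegree - m)) := by
  have vieta := coeff_eq_esymm_roots_of_splits (IsAlgClosed.splits (derivative^[k] p))
    (k := m - k) (by rw [natDegree_iterate_derivative_eq]; omega)
  rwa [coeff_iterate_derivative, Nat.sub_add_cancel hkm, nsmul_eq_mul,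
    leadingCoeff_iterate_derivative p (hkm.trans hm), natDegree_iterate_derivative_eq,
    show p.natDegree - k - (m - k) = p.natDegree - m by omega, mul_assoc] at vieta

end IsAlgClosed

section Quintic

variable {f : ℂ[X]}

theorem coeff_five_ne_zero_of_natDegree_eq_five (hf : f.natDegree = 5) : f.coeff 5 ≠ 0 := by
  rw [← hf, ← leadingCoeff, leadingCoeff_ne_zero]
  rintro rfl
  simp at hf

theorem eval_eq_of_natDegree_eq_five (hf : f.natDegree = 5) (x : ℂ) :
    f.eval x = f.coeff 0 + f.coeff 1 * x + f.coeff 2 * x ^ 2 + f.coeff 3 * x ^ 3 +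
      f.coeff 4 * x ^ 4 + f.coeff 5 * x ^ 5 := by
  simp [eval_eq_sum_range' (show f.natDegree < 6 by omega), Finset.sum_range_succ]

theorem phi_one_of_natDegree_eq_five (hf : f.natDegree = 5) :
    phi f 1 = f.coeff 0 - f.coeff 1 * f.coeff 4 / (5 * f.coeff 5)
      - 3 * f.coeff 2 * f.coeff 3 / (10 * f.coeff 5)
      + 4 * f.coeff 2 * f.coeff 4 ^ 2 / (25 * f.coeff 5 ^ 2)
      + 9 * f.coeff 3 ^ 2 * f.coeff 4 / (50 * f.coeff 5 ^ 2)
      - 16 * f.coeff 3 * f.coeff 4 ^ 3 / (125 * f.coeff 5 ^ 3)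
      + 64 * f.coeff 4 ^ 5 / (3125 * f.coeff 5 ^ 4) := by
  obtain ⟨w, x, y, z, hroots⟩ := Multiset.card_eq_four.1 <|
    (card_roots_iterate_derivative f 1).trans (by rw [hf])
  have vieta (m : ℕ) (hm : 1 ≤ m) (hm' : m ≤ 5) :=
    descFactorial_mul_coeff_eq_esymm_roots_iterate_derivative f hm (hf ▸ hm')
  have h4 := vieta 4 (by norm_num) (by norm_num)
  have h3 := vieta 3 (by norm_num) (by norm_num)
  have h2 := vieta 2 (by norm_num) (by norm_num)
  have h1 := vieta 1 le_rfl (by norm_num)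
  rw [hroots] at h4 h3 h2 h1
  norm_num [hf, leadingCoeff, Multiset.esymm, Multiset.powersetCard_one] at h4 h3 h2 h1
  have e4 : f.coeff 4 = -5 / 4 * f.coeff 5 * (w + x + y + z) := by linear_combination h4 / 4
  have e3 : f.coeff 3 = 5 / 3 * f.coeff 5 * (w * x + w * y + w * z + x * y + x * z + y * z) := by
    linear_combination h3 / 3
  have e2 : f.coeff 2 = -5 / 2 * f.coeff 5 * (w * x * y + w * x * z + w * y * z + x * y * z) := by
    linear_combination h2 / 2
  have e1 : f.coeff 1 = 5 * f.coeff 5 * (w * x * y * z) := by linear_combination h1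
  have ha5 := coeff_five_ne_zero_of_natDegree_eq_five hf
  rw [phi, hroots, hf]
  norm_num [eval_eq_of_natDegree_eq_five hf, e4, e3, e2, e1]
  field_simp
  ring

theorem phi_two_of_natDegree_eq_five (hf : f.natDegree = 5) :
    phi f 2 = f.coeff 0 - f.coeff 1 * f.coeff 4 / (5 * f.coeff 5)
      - f.coeff 2 * f.coeff 3 / (4 * f.coeff 5)
      + 7 * f.coeff 2 * f.coeff 4 ^ 2 / (50 * f.coeff 5 ^ 2)
      + 3 * f.coeff 3 ^ 2 * f.coeff 4 / (20 * f.coeff 5 ^ 2)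
      - 27 * f.coeff 3 * f.coeff 4 ^ 3 / (250 * f.coeff 5 ^ 3)
      + 54 * f.coeff 4 ^ 5 / (3125 * f.coeff 5 ^ 4) := by
  obtain ⟨x, y, z, hroots⟩ := Multiset.card_eq_three.1 <|
    (card_roots_iterate_derivative f 2).trans (by rw [hf])
  have vieta (m : ℕ) (hm : 2 ≤ m) (hm' : m ≤ 5) :=
    descFactorial_mul_coeff_eq_esymm_roots_iterate_derivative f hm (hf ▸ hm')
  have h4 := vieta 4 (by norm_num) (by norm_num)
  have h3 := vieta 3 (by norm_num) (by norm_num)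
  have h2 := vieta 2 le_rfl (by norm_num)
  rw [hroots] at h4 h3 h2
  norm_num [hf, leadingCoeff, Multiset.esymm, Multiset.powersetCard_one] at h4 h3 h2
  have e4 : f.coeff 4 = -5 / 3 * f.coeff 5 * (x + y + z) := by linear_combination h4 / 12
  have e3 : f.coeff 3 = 10 / 3 * f.coeff 5 * (x * y + x * z + y * z) := by
    linear_combination h3 / 6
  have e2 : f.coeff 2 = -10 * f.coeff 5 * (x * y * z) := by linear_combination h2 / 2
  have ha5 := coeff_five_ne_zero_of_natDegree_eq_five hf
  rw [phi, hroots, hf]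
  norm_num [eval_eq_of_natDegree_eq_five hf, e4, e3, e2]
  field_simp
  ring

theorem phi_three_of_natDegree_eq_five (hf : f.natDegree = 5) :
    phi f 3 = f.coeff 0 - f.coeff 1 * f.coeff 4 / (5 * f.coeff 5)
      - f.coeff 2 * f.coeff 3 / (10 * f.coeff 5)
      + 2 * f.coeff 2 * f.coeff 4 ^ 2 / (25 * f.coeff 5 ^ 2)
      + 3 * f.coeff 3 ^ 2 * f.coeff 4 / (50 * f.coeff 5 ^ 2)
      - 6 * f.coeff 3 * f.coeff 4 ^ 3 / (125 * f.coeff 5 ^ 3)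
      + 24 * f.coeff 4 ^ 5 / (3125 * f.coeff 5 ^ 4) := by
  obtain ⟨y, z, hroots⟩ := Multiset.card_eq_two.1 <|
    (card_roots_iterate_derivative f 3).trans (by rw [hf])
  have vieta (m : ℕ) (hm : 3 ≤ m) (hm' : m ≤ 5) :=
    descFactorial_mul_coeff_eq_esymm_roots_iterate_derivative f hm (hf ▸ hm')
  have h4 := vieta 4 (by norm_num) (by norm_num)
  have h3 := vieta 3 le_rfl (by norm_num)
  rw [hroots] at h4 h3
  norm_num [hf, leadingCoeff, Multiset.esymm, Multiset.powersetCard_one] at h4 h3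
  have e4 : f.coeff 4 = -5 / 2 * f.coeff 5 * (y + z) := by linear_combination h4 / 24
  have e3 : f.coeff 3 = 10 * f.coeff 5 * (y * z) := by linear_combination h3 / 6
  have ha5 := coeff_five_ne_zero_of_natDegree_eq_five hf
  rw [phi, hroots, hf]
  norm_num [eval_eq_of_natDegree_eq_five hf, e4, e3]
  field_simp
  ring

theorem phi_four_of_natDegree_eq_five (hf : f.natDegree = 5) :
    phi f 4 = f.coeff 0 - f.coeff 1 * f.coeff 4 / (5 * f.coeff 5)
      + f.coeff 2 * f.coeff 4 ^ 2 / (25 * f.coeff 5 ^ 2)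
      - f.coeff 3 * f.coeff 4 ^ 3 / (125 * f.coeff 5 ^ 3)
      + 4 * f.coeff 4 ^ 5 / (3125 * f.coeff 5 ^ 4) := by
  obtain ⟨z, hroots⟩ := Multiset.card_eq_one.1 <|
    (card_roots_iterate_derivative f 4).trans (by rw [hf])
  have h4 := descFactorial_mul_coeff_eq_esymm_roots_iterate_derivative f (m := 4) le_rfl
    (by rw [hf]; norm_num)
  rw [hroots] at h4
  norm_num [hf, leadingCoeff, Multiset.esymm, Multiset.powersetCard_one] at h4
  have e4 : f.coeff 4 = -5 * f.coeff 5 * z := by linear_combination h4 / 24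
  have ha5 := coeff_five_ne_zero_of_natDegree_eq_five hf
  rw [phi, hroots, hf]
  norm_num [eval_eq_of_natDegree_eq_five hf, e4]
  field_simp
  ring

end Quintic

/-- In any quintic, `1·φ₁ − 2·φ₂ + 2·φ₃ − 1·φ₄ = 0`. -/
theorem quintic_alternating_binomial_relation (f : Polynomial ℂ) (hf : f.degree = 5) :
    1 * phi f 1 - 2 * phi f 2 + 2 * phi f 3 - 1 * phi f 4 = 0 := by
  have hf' : f.natDegree = 5 := natDegree_eq_of_degree_eq_some hf
  rw [phi_one_of_natDegree_eq_five hf', phi_two_of_natDegree_eq_five hf',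
    phi_three_of_natDegree_eq_five hf', phi_four_of_natDegree_eq_five hf']
  ring
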